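/- arXiv:0811.0710 — 2 statements merged into one kernel-verified Lean document; each statement's English description precedes it below -/
import Mathlib

section
/- A k-move N ↔^{(i,j)} N' preserves suitable connectedness on both sides whenever N and N' have the same connection points on their boundary edges; in particular, the 11 mosaic planar isotopy moves restrict to permutations of the set K^(n) of knot n-mosaics. -/
/-- An (unoriented) `n`-mosaic: an `n × n` matrix of tiles `T_0, …, T_10`,
encoded as elements of `Fin 11`. -/
abbrev Mosaic (n : ℕ) : Type := Fin n → Fin n → Fin 11

/-- Does tile `t` have a connection point on its top edge? -/
def cTop (t : Fin 11) : Bool :=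
  t.val == 3 || t.val == 4 || t.val == 6 || decide (7 ≤ t.val)

/-- Does tile `t` have a connection point on its bottom edge? -/
def cBot (t : Fin 11) : Bool :=
  t.val == 1 || t.val == 2 || t.val == 6 || decide (7 ≤ t.val)

/-- Does tile `t` have a connection point on its left edge? -/
def cLeft (t : Fin 11) : Bool :=
  t.val == 1 || t.val == 4 || t.val == 5 || decide (7 ≤ t.val)

/-- Does tile `t` have a connection point on its right edge? -/
def cRight (t : Fin 11) : Bool :=
  t.val == 2 || t.val == 3 || t.val == 5 || decide (7 ≤ t.val)

/-- A knot `n`-mosaic: every tile is suitably connected, i.e. no connection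
point lies on the outer boundary, and connection points match across every
shared internal edge. -/
def IsKnotMosaic {n : ℕ} (M : Mosaic n) : Prop :=
  (∀ i j : Fin n, i.val = 0 → cTop (M i j) = false) ∧
  (∀ i j : Fin n, i.val = n - 1 → cBot (M i j) = false) ∧
  (∀ i j : Fin n, j.val = 0 → cLeft (M i j) = false) ∧
  (∀ i j : Fin n, j.val = n - 1 → cRight (M i j) = false) ∧
  (∀ (i j : Fin n) (h : i.val + 1 < n), cBot (M i j) = cTop (M ⟨i.val + 1, h⟩ j)) ∧
  (∀ (i j : Fin n) (h : j.val + 1 < n), cRight (M i j) = cLeft (M i ⟨j.val + 1, h⟩))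

/-- The `k`-submosaic of `M` at location `(i, j)`. -/
def submosaic {n : ℕ} (k i j : ℕ) (hi : i + k ≤ n) (hj : j + k ≤ n) (M : Mosaic n) :
    Mosaic k :=
  fun a b => M ⟨i + a.val, by have := a.isLt; omega⟩ ⟨j + b.val, by have := b.isLt; omega⟩

/-- Replace the `k`-submosaic of `M` at location `(i, j)` by `N`. -/
def overwrite {n : ℕ} (k i j : ℕ) (N : Mosaic k) (M : Mosaic n) : Mosaic n :=
  fun a b =>
    if h : i ≤ a.val ∧ a.val < i + k ∧ j ≤ b.val ∧ b.val < j + k then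
      N ⟨a.val - i, by omega⟩ ⟨b.val - j, by omega⟩
    else M a b

/-- The `k`-move `N ↔ N'` at location `(i, j)` on the set of `n`-mosaics. -/
def kmove {n : ℕ} (k i j : ℕ) (hi : i + k ≤ n) (hj : j + k ≤ n)
    (N N' : Mosaic k) (M : Mosaic n) : Mosaic n :=
  if submosaic k i j hi hj M = N then overwrite k i j N' M
  else if submosaic k i j hi hj M = N' then overwrite k i j N M
  else M

/-- A `k`-mosaic is internally suitably connected: connection points match
across every internal edge of the `k × k` block. -/
def InternallyConnected {k : ℕ} (N : Mosaic k) : Prop :=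
  (∀ (a b : Fin k) (h : a.val + 1 < k), cBot (N a b) = cTop (N ⟨a.val + 1, h⟩ b)) ∧
  (∀ (a b : Fin k) (h : b.val + 1 < k), cRight (N a b) = cLeft (N a ⟨b.val + 1, h⟩))

/-- Two `k`-mosaics have the same connection points on the boundary edges of
the `k × k` block. -/
def SameBoundary {k : ℕ} (N N' : Mosaic k) : Prop :=
  (∀ a b : Fin k, a.val = 0 → cTop (N a b) = cTop (N' a b)) ∧
  (∀ a b : Fin k, a.val = k - 1 → cBot (N a b) = cBot (N' a b)) ∧
  (∀ a b : Fin k, b.val = 0 → cLeft (N a b) = cLeft (N' a b)) ∧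
  (∀ a b : Fin k, b.val = k - 1 → cRight (N a b) = cRight (N' a b))

lemma sub_eq {n k i j : ℕ} (hi : i + k ≤ n) (hj : j + k ≤ n) {M : Mosaic n} {N : Mosaic k}
    (hs : submosaic k i j hi hj M = N) (a b : Fin n)
    (h1 : i ≤ a.val) (h2 : a.val < i + k) (h3 : j ≤ b.val) (h4 : b.val < j + k) :
    M a b = N ⟨a.val - i, by omega⟩ ⟨b.val - j, by omega⟩ := by
  subst hs
  simp only [submosaic]
  have ha : a = (⟨i + (a.val - i), by omega⟩ : Fin n) := by apply Fin.ext; simp; omega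
  have hb : b = (⟨j + (b.val - j), by omega⟩ : Fin n) := by apply Fin.ext; simp; omega
  conv_lhs => rw [ha, hb]

lemma overwrite_knot {n k i j : ℕ} (hi : i + k ≤ n) (hj : j + k ≤ n)
    {N N' : Mosaic k} {M : Mosaic n}
    (hs : submosaic k i j hi hj M = N) (hN' : InternallyConnected N')
    (hB : SameBoundary N N') (hM : IsKnotMosaic M) :
    IsKnotMosaic (overwrite k i j N' M) := by
  obtain ⟨m1, m2, m3, m4, m5, m6⟩ := hM
  obtain ⟨b1, b2, b3, b4⟩ := hB
  refine ⟨?_, ?_, ?_, ?_, ?_, ?_⟩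
  · intro a b ha
    simp only [overwrite]
    split_ifs with h
    · rw [← b1 _ _ (by simp; omega), ← sub_eq hi hj hs a b h.1 h.2.1 h.2.2.1 h.2.2.2]
      exact m1 a b ha
    · exact m1 a b ha
  · intro a b ha
    simp only [overwrite]
    split_ifs with h
    · rw [← b2 _ _ (by simp; omega), ← sub_eq hi hj hs a b h.1 h.2.1 h.2.2.1 h.2.2.2]
      exact m2 a b ha
    · exact m2 a b ha
  · intro a b ha
    simp only [overwrite]
    split_ifs with h
    · rw [← b3 _ _ (by simp; omega), ← sub_eq hi hj hs a b h.1 h.2.1 h.2.2.1 h.2.2.2]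
      exact m3 a b ha
    · exact m3 a b ha
  · intro a b ha
    simp only [overwrite]
    split_ifs with h
    · rw [← b4 _ _ (by simp; omega), ← sub_eq hi hj hs a b h.1 h.2.1 h.2.2.1 h.2.2.2]
      exact m4 a b ha
    · exact m4 a b ha
  · intro a b h
    simp only [overwrite]
    split_ifs with h1 h2 h2
    · simp only [show a.val + 1 - i = a.val - i + 1 from by omega]
      exact hN'.1 ⟨a.val - i, by omega⟩ ⟨b.val - j, by omega⟩ (show a.val - i + 1 < k by omega)
    · rw [← b2 _ _ (by simp; omega), ← sub_eq hi hj hs a b h1.1 h1.2.1 h1.2.2.1 h1.2.2.2]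
      exact m5 a b h
    · rw [← b1 _ _ (by simp; omega),
        ← sub_eq hi hj hs ⟨a.val + 1, h⟩ b h2.1 h2.2.1 h2.2.2.1 h2.2.2.2]
      exact m5 a b h
    · exact m5 a b h
  · intro a b h
    simp only [overwrite]
    split_ifs with h1 h2 h2
    · simp only [show b.val + 1 - j = b.val - j + 1 from by omega]
      exact hN'.2 ⟨a.val - i, by omega⟩ ⟨b.val - j, by omega⟩ (show b.val - j + 1 < k by omega)
    · rw [← b4 _ _ (by simp; omega), ← sub_eq hi hj hs a b h1.1 h1.2.1 h1.2.2.1 h1.2.2.2]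
      exact m6 a b h
    · rw [← b3 _ _ (by simp; omega),
        ← sub_eq hi hj hs a ⟨b.val + 1, h⟩ h2.1 h2.2.1 h2.2.2.1 h2.2.2.2]
      exact m6 a b h
    · exact m6 a b h

lemma sameBoundary_symm {k : ℕ} {N N' : Mosaic k} (h : SameBoundary N N') :
    SameBoundary N' N :=
  ⟨fun a b ha => (h.1 a b ha).symm, fun a b ha => (h.2.1 a b ha).symm,
   fun a b ha => (h.2.2.1 a b ha).symm, fun a b ha => (h.2.2.2 a b ha).symm⟩

/-- A `k`-move `N ↔ N'` between internally suitably connected blocks with the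
same boundary connection points preserves suitable connectedness: it maps knot
`n`-mosaics to knot `n`-mosaics (and hence restricts to a permutation of
`K^(n)`; e.g. the 11 mosaic planar isotopy moves are of this form). -/
theorem kmove_preserves_isKnotMosaic {n k i j : ℕ} (hi : i + k ≤ n) (hj : j + k ≤ n)
    (N N' : Mosaic k) (hN : InternallyConnected N) (hN' : InternallyConnected N')
    (hB : SameBoundary N N') :
    ∀ M : Mosaic n, IsKnotMosaic M → IsKnotMosaic (kmove k i j hi hj N N' M) := by
  intro M hM
  unfold kmove
  split_ifs with h1 h2
  · exact overwrite_knot hi hj h1 hN' hB hM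
  · exact overwrite_knot hi hj h2 hN (sameBoundary_symm hB) hM
  · exact hM
end

section
/- If M is a knot n-mosaic (all tiles suitably connected), then ι(M) is a knot (n+1)-mosaic. -/
/-- The mosaic injection `ι : M^(n) → M^(n+1)`, padding with blank tiles. -/
def iota {n : ℕ} (M : Mosaic n) : Mosaic (n + 1) :=
  fun i j =>
    if h : i.val < n ∧ j.val < n then M ⟨i.val, h.1⟩ ⟨j.val, h.2⟩ else 0

/-- If `M` is a knot `n`-mosaic, then `ι M` is a knot `(n+1)`-mosaic. -/
theorem iota_isKnotMosaic {n : ℕ} (M : Mosaic n) (hM : IsKnotMosaic M) :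
    IsKnotMosaic (iota M) := by
  obtain ⟨h1, h2, h3, h4, h5, h6⟩ := hM
  refine ⟨?_, ?_, ?_, ?_, ?_, ?_⟩
  · intro i j hi
    unfold iota
    split
    · next h => exact h1 ⟨i.val, h.1⟩ ⟨j.val, h.2⟩ hi
    · decide
  · intro i j hi
    unfold iota
    have : ¬ (i.val < n ∧ j.val < n) := by
      simp only [Nat.add_sub_cancel] at hi; omega
    rw [dif_neg this]; decide
  · intro i j hj
    unfold iota
    split
    · next h => exact h3 ⟨i.val, h.1⟩ ⟨j.val, h.2⟩ hj
    · decide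
  · intro i j hj
    unfold iota
    have : ¬ (i.val < n ∧ j.val < n) := by
      simp only [Nat.add_sub_cancel] at hj; omega
    rw [dif_neg this]; decide
  · intro i j h
    unfold iota
    by_cases hj : j.val < n
    · by_cases hi : i.val + 1 < n
      · rw [dif_pos ⟨by omega, hj⟩, dif_pos ⟨hi, hj⟩]
        exact h5 ⟨i.val, by omega⟩ ⟨j.val, hj⟩ hi
      · have hin : i.val < n ∨ ¬ i.val < n := em _
        rcases hin with hin | hin
        · rw [dif_pos ⟨hin, hj⟩, dif_neg (fun hc => absurd hc.1 hi)]
          have := h2 ⟨i.val, hin⟩ ⟨j.val, hj⟩ (show i.val = n - 1 by omega)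
          rw [this]; decide
        · rw [dif_neg (fun hc => absurd hc.1 hin),
            dif_neg (fun hc => absurd hc.1 hi)]
          decide
    · rw [dif_neg (fun hc => absurd hc.2 hj), dif_neg (fun hc => absurd hc.2 hj)]
      decide
  · intro i j h
    unfold iota
    by_cases hi : i.val < n
    · by_cases hj : j.val + 1 < n
      · rw [dif_pos ⟨hi, by omega⟩, dif_pos ⟨hi, hj⟩]
        exact h6 ⟨i.val, hi⟩ ⟨j.val, by omega⟩ hj
      · have hjn : j.val < n ∨ ¬ j.val < n := em _
        rcases hjn with hjn | hjn
        · rw [dif_pos ⟨hi, hjn⟩, dif_neg (fun hc => absurd hc.2 hj)]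
          have := h4 ⟨i.val, hi⟩ ⟨j.val, hjn⟩ (show j.val = n - 1 by omega)
          rw [this]; decide
        · rw [dif_neg (fun hc => absurd hc.2 hjn),
            dif_neg (fun hc => absurd hc.2 hj)]
          decide
    · rw [dif_neg (fun hc => absurd hc.1 hi), dif_neg (fun hc => absurd hc.1 hi)]
      decide
end
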